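/- arXiv:1012.1158 — 6 statements merged into one kernel-verified Lean document; each statement's English description precedes it below -/
import Mathlib

section
/- There exist constants c₁, c₂ > 0 such that for all p, q ∈ ℝ³, c₁·|p−q|/√(p⁰q⁰) ≤ g(p,q) ≤ c₂·|p−q|, where g(p,q) = √(2(p⁰q⁰ − p·q − 1)). -/
open scoped RealInnerProductSpace

noncomputable section

abbrev R3 := EuclideanSpace ℝ (Fin 3)

/-- relativistic energy -/
def en (p : R3) : ℝ := Real.sqrt (1 + ‖p‖ ^ 2)

/-- relative momentum -/
def rg (p q : R3) : ℝ := Real.sqrt (2 * (en p * en q - ⟪p, q⟫ - 1))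

lemma en_sq (p : R3) : en p ^ 2 = 1 + ‖p‖ ^ 2 :=
  Real.sq_sqrt (by positivity)

lemma one_le_en (p : R3) : 1 ≤ en p := by
  rw [show (1:ℝ) = Real.sqrt 1 by simp [Real.sqrt_one]]
  exact Real.sqrt_le_sqrt (by nlinarith [sq_nonneg ‖p‖])

set_option maxHeartbeats 1000000 in
theorem g_comparable :
    ∃ c₁ c₂ : ℝ, 0 < c₁ ∧ 0 < c₂ ∧ ∀ p q : R3,
      c₁ * ‖p - q‖ / Real.sqrt (en p * en q) ≤ rg p q ∧
      rg p q ≤ c₂ * ‖p - q‖ := by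
  refine ⟨1/2, 1, by norm_num, by norm_num, fun p q => ?_⟩
  set A := en p with hA
  set B := en q with hB
  set a := ‖p‖ with ha
  set b := ‖q‖ with hb
  set t := ⟪p, q⟫ with htdef
  have hA2 : A ^ 2 = 1 + a ^ 2 := en_sq p
  have hB2 : B ^ 2 = 1 + b ^ 2 := en_sq q
  have hA1 : 1 ≤ A := one_le_en p
  have hB1 : 1 ≤ B := one_le_en q
  have hanz : 0 ≤ a := norm_nonneg _
  have hbnz : 0 ≤ b := norm_nonneg _
  have ht : t ≤ a * b := real_inner_le_norm p q
  have hABab : a * b + 1 ≤ A * B := by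
    nlinarith [sq_nonneg (a - b), sq_nonneg (A*B - a*b - 1), sq_nonneg (A - B),
      mul_pos (lt_of_lt_of_le one_pos hA1) (lt_of_lt_of_le one_pos hB1)]
  have h0 : 0 ≤ 2 * (A * B - t - 1) := by nlinarith
  have hrg2 : rg p q ^ 2 = 2 * (A * B - t - 1) := Real.sq_sqrt h0
  have hrgnn : 0 ≤ rg p q := Real.sqrt_nonneg _
  have hpq : ‖p - q‖ ^ 2 = a ^ 2 - 2 * t + b ^ 2 := by
    rw [@norm_sub_sq_real]
  constructor
  · -- lower bound
    have hABpos : 0 < A * B := by nlinarith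
    have hsAB : Real.sqrt (A * B) ^ 2 = A * B := Real.sq_sqrt hABpos.le
    have hsABpos : 0 < Real.sqrt (A * B) := Real.sqrt_pos.2 hABpos
    rw [div_le_iff₀ hsABpos]
    have hfact : (A*B - a*b - 1) * (A*B + a*b + 1) = (a - b)^2 := by
      nlinarith [hA2, hB2]
    have e1 : (0:ℝ) ≤ (a*b - t) * (8 * (A*B) - 2) :=
      mul_nonneg (by linarith) (by nlinarith)
    have e2 : (0:ℝ) ≤ (A*B - a*b - 1) * (7*(A*B) - a*b - 1) :=
      mul_nonneg (by linarith) (by nlinarith)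
    have hkey : a ^ 2 - 2 * t + b ^ 2 ≤ 8 * (A * B) * (A * B - t - 1) := by
      nlinarith [e1, e2, hfact]
    have hsq : (1/2 * ‖p - q‖) ^ 2 ≤ (rg p q * Real.sqrt (A * B)) ^ 2 := by
      rw [mul_pow, mul_pow, hrg2, hsAB, hpq]
      nlinarith
    calc (1:ℝ)/2 * ‖p - q‖ = Real.sqrt ((1/2 * ‖p - q‖)^2) := by
            rw [Real.sqrt_sq (by positivity)]
      _ ≤ Real.sqrt ((rg p q * Real.sqrt (A * B))^2) := Real.sqrt_le_sqrt hsq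
      _ = rg p q * Real.sqrt (A * B) := Real.sqrt_sq (by positivity)
  · -- upper bound
    have hle : 2 * (A * B - t - 1) ≤ ‖p - q‖ ^ 2 := by
      rw [hpq]; nlinarith [sq_nonneg (A - B)]
    calc rg p q ≤ Real.sqrt (‖p - q‖ ^ 2) := Real.sqrt_le_sqrt hle
      _ = 1 * ‖p - q‖ := by rw [Real.sqrt_sq (norm_nonneg _), one_mul]
end
end

section
/- Let m ≥ 1. On the region where |p| ≥ 1 and |p|^{1/m} ≥ 2·q⁰, there exist constants C₁, C₂, C₃ > 0 (depending only on m) such that C₁ ≤ C₂·√(⟨p⟩/⟨q⟩) ≤ g(p,q) ≤ C₃·⟨p⟩, where ⟨p⟩ = √(1+|p|²). -/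
open scoped RealInnerProductSpace

noncomputable section

lemma aux_h2 (A B a b : ℝ) (hA2 : A ^ 2 = 1 + a ^ 2) (hB2 : B ^ 2 = 1 + b ^ 2)
    (hA5 : 5 ≤ A ^ 2) (hABhalf : A * (2 * B) ≤ A * A) :
    2 * (A * B) + A ^ 2 / 20 ≤ 1 + a ^ 2 + b ^ 2 := by
  nlinarith [sq_nonneg (A / 2 - B)]

set_option maxHeartbeats 1600000

theorem g_bounds_on_Ac (m : ℕ) (hm : 1 ≤ m) :
    ∃ C₁ C₂ C₃ : ℝ, 0 < C₁ ∧ 0 < C₂ ∧ 0 < C₃ ∧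
      ∀ p q : R3, 1 ≤ ‖p‖ → 2 * en q ≤ ‖p‖ ^ ((1 : ℝ) / m) →
        C₁ ≤ C₂ * Real.sqrt (en p / en q) ∧
        C₂ * Real.sqrt (en p / en q) ≤ rg p q ∧
        rg p q ≤ C₃ * en p := by
  refine ⟨1/5, 1/5, 2, by norm_num, by norm_num, by norm_num, ?_⟩
  intro p q hp hq
  set a := ‖p‖ with ha_def
  set b := ‖q‖ with hb_def
  set A := en p with hA_def
  set B := en q with hB_def
  have ha0 : (0:ℝ) ≤ a := norm_nonneg p
  have hb0 : (0:ℝ) ≤ b := norm_nonneg q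
  have hA2 : A ^ 2 = 1 + a ^ 2 := Real.sq_sqrt (by positivity)
  have hB2 : B ^ 2 = 1 + b ^ 2 := Real.sq_sqrt (by positivity)
  have hA1 : 1 ≤ A := by
    have := Real.sqrt_le_sqrt (show (1:ℝ) ≤ 1 + a ^ 2 by nlinarith)
    simpa [hA_def, en] using this
  have hB1 : 1 ≤ B := by
    have := Real.sqrt_le_sqrt (show (1:ℝ) ≤ 1 + b ^ 2 by nlinarith)
    simpa [hB_def, en] using this
  have haA : a ≤ A := by
    rw [hA_def, en]
    nlinarith [Real.sq_sqrt (show (0:ℝ) ≤ 1 + a^2 by positivity),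
      Real.sqrt_nonneg (1 + a^2)]
  have hbB : b ≤ B := by nlinarith
  -- key region fact : 2 * B ≤ a
  have hpow : a ^ ((1:ℝ)/m) ≤ a := by
    have h1m : (1:ℝ)/m ≤ 1 := by
      rw [div_le_one (by exact_mod_cast Nat.pos_of_ne_zero (by omega))]
      exact_mod_cast hm
    calc a ^ ((1:ℝ)/m) ≤ a ^ (1:ℝ) :=
          Real.rpow_le_rpow_of_exponent_le hp h1m
      _ = a := Real.rpow_one a
  have h2Ba : 2 * B ≤ a := le_trans hq hpow
  have ha2 : 2 ≤ a := by linarith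
  have hip : ⟪p, q⟫ ≤ a * b := real_inner_le_norm p q
  have hip' : -(a * b) ≤ ⟪p, q⟫ := by
    have := abs_real_inner_le_norm p q
    rw [abs_le] at this; exact this.1
  clear hq hpow
  clear_value a b A B
  have hA0 : (0:ℝ) < A := by linarith
  have hB0 : (0:ℝ) < B := by linarith
  have hBA : B ≤ A := by linarith
  have habAB : a * b ≤ A * B := by nlinarith
  -- lower bound on g^2
  have hkey : A / (20 * B) ≤ 2 * (A * B - ⟪p, q⟫ - 1) := by
    have hid : (A * B - a * b) * (A * B + a * b) = 1 + a ^ 2 + b ^ 2 := by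
      nlinarith
    have h1 : (1 + a ^ 2 + b ^ 2) / (2 * (A * B)) ≤ A * B - a * b := by
      rw [div_le_iff₀ (by positivity)]
      nlinarith [sq_nonneg (A * B - a * b)]
    have h2Ble : 2 * B ≤ A := by linarith
    have hA5 : 5 ≤ A ^ 2 := by nlinarith
    have hABhalf : A * (2 * B) ≤ A * A :=
      mul_le_mul_of_nonneg_left h2Ble hA0.le
    have h2 : 2 * (A * B) + A ^ 2 / 20 ≤ 1 + a ^ 2 + b ^ 2 :=
      aux_h2 A B a b hA2 hB2 hA5 hABhalf
    have e1 : (2 * (A * B) + A ^ 2 / 20) / (2 * (A * B))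
        ≤ (1 + a ^ 2 + b ^ 2) / (2 * (A * B)) := by gcongr
    have e2 : (2 * (A * B) + A ^ 2 / 20) / (2 * (A * B)) = 1 + A / (40 * B) := by
      field_simp
      ring
    have h3 : A / (40 * B) ≤ A * B - a * b - 1 := by
      rw [e2] at e1
      linarith
    have e3 : A / (20 * B) = 2 * (A / (40 * B)) := by ring
    rw [e3]
    linarith
  have hgpos : (0:ℝ) ≤ 2 * (A * B - ⟪p, q⟫ - 1) := by
    have : (0:ℝ) ≤ A / (20 * B) := by positivity
    linarith [hkey]
  constructor
  · -- C₁ ≤ C₂ √(A/B)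
    have h1 : (1:ℝ) ≤ A / B := by
      rw [le_div_iff₀ hB0]; linarith
    have : (1:ℝ) ≤ Real.sqrt (A / B) := by
      rw [show (1:ℝ) = Real.sqrt 1 by rw [Real.sqrt_one]]
      exact Real.sqrt_le_sqrt h1
    nlinarith
  constructor
  · -- middle ≤ rg
    have heq : (1/5 : ℝ) * Real.sqrt (A / B) = Real.sqrt ((1/25) * (A / B)) := by
      rw [Real.sqrt_mul (by norm_num), show Real.sqrt (1/25) = 1/5 by
        rw [show (1/25:ℝ) = (1/5)^2 by norm_num, Real.sqrt_sq (by norm_num)]]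
    rw [heq, rg, ← hA_def, ← hB_def]
    apply Real.sqrt_le_sqrt
    calc (1/25 : ℝ) * (A / B) ≤ A / (20 * B) := by
          rw [show (1/25 : ℝ) * (A / B) = A / (25 * B) by ring,
            div_le_div_iff₀ (by positivity) (by positivity)]
          nlinarith [mul_nonneg hA0.le hB0.le]
      _ ≤ 2 * (A * B - ⟪p, q⟫ - 1) := hkey
  · -- rg ≤ 2 A
    rw [rg, ← hA_def, ← hB_def, show (2:ℝ) * A = Real.sqrt ((2*A)^2) by
      rw [Real.sqrt_sq (by positivity)]]
    apply Real.sqrt_le_sqrt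
    nlinarith [mul_le_mul_of_nonneg_left hBA hA0.le]
end
end

section
/- For fixed p ∈ ℝ³, the map q ↦ u := p⁰q − q⁰p (where p⁰ = √(1+|p|²), q⁰ = √(1+|q|²)) has Jacobian determinant det(∂u/∂q) = (p⁰)²(p⁰q⁰ − p·q)/q⁰, which satisfies det(∂u/∂q) ≥ (p⁰)²/q⁰ > 0. -/
open scoped RealInnerProductSpace

noncomputable section

lemma en_pos (p : R3) : 0 < en p := by
  apply Real.sqrt_pos.2; positivity

lemma one_le_key (p q : R3) : 1 ≤ en p * en q - ⟪p, q⟫ := by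
  have h1 : ⟪p, q⟫ ≤ ‖p‖ * ‖q‖ := real_inner_le_norm p q
  have h2 : 1 + ‖p‖ * ‖q‖ ≤ en p * en q := by
    have hnn : (0:ℝ) ≤ 1 + ‖p‖ * ‖q‖ := by positivity
    have := sq_nonneg (‖p‖ - ‖q‖)
    nlinarith [en_sq p, en_sq q, en_pos p, en_pos q, sq_nonneg (en p * en q - (1 + ‖p‖ * ‖q‖)),
      mul_pos (en_pos p) (en_pos q)]
  linarith

theorem jacobian_determinant (p q : R3) :
    (Matrix.of fun i j : Fin 3 => en p * (if i = j then (1:ℝ) else 0)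
        - q j * p i / en q).det
      = (en p) ^ 2 * (en p * en q - ⟪p, q⟫) / en q ∧
    (en p) ^ 2 / en q ≤
      (Matrix.of fun i j : Fin 3 => en p * (if i = j then (1:ℝ) else 0)
        - q j * p i / en q).det ∧
    0 < (Matrix.of fun i j : Fin 3 => en p * (if i = j then (1:ℝ) else 0)
        - q j * p i / en q).det := by
  have hq : en q ≠ 0 := (en_pos q).ne'
  have hinner : ⟪p, q⟫ = p 0 * q 0 + p 1 * q 1 + p 2 * q 2 := by
    simp [PiLp.inner_apply, Fin.sum_univ_three, RCLike.inner_apply, mul_comm]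
  have hdet : (Matrix.of fun i j : Fin 3 => en p * (if i = j then (1:ℝ) else 0)
        - q j * p i / en q).det
      = (en p) ^ 2 * (en p * en q - ⟪p, q⟫) / en q := by
    rw [Matrix.det_fin_three, hinner]
    simp only [Matrix.of_apply]
    norm_num [Fin.ext_iff]
    field_simp
    ring
  refine ⟨hdet, ?_, ?_⟩
  · rw [hdet]
    have h := one_le_key p q
    have : (en p) ^ 2 * 1 ≤ (en p) ^ 2 * (en p * en q - ⟪p, q⟫) := by
      apply mul_le_mul_of_nonneg_left h (by positivity)
    rw [mul_one] at this
    gcongr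
    exact (en_pos q).le
  · rw [hdet]
    have h := one_le_key p q
    have hp := en_pos p
    apply div_pos _ (en_pos q)
    nlinarith
end
end

section
/- For fixed p ∈ ℝ³ and u ∈ ℝ³, with p⁰ = √(1+|p|²), if q ∈ ℝ³ satisfies u = p⁰q − q⁰p, where q⁰ = √(1+|q|²), then the transformation is invertible with q = (q⁰/p⁰)p + u/p⁰, and q⁰ is determined uniquely by u and p. -/
open scoped RealInnerProductSpace

noncomputable section

lemma en_ne (p : R3) : en p ≠ 0 := (en_pos p).ne'

lemma key (p q u : R3) (h : u = en p • q - en q • p) :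
    en q ^ 2 = 2 * ⟪u, p⟫ * en q + (‖u‖ ^ 2 + en p ^ 2) := by
  have h1 : en p • q = u + en q • p := by rw [h]; abel
  have h2 : ‖en p • q‖ ^ 2 = ‖u + en q • p‖ ^ 2 := by rw [h1]
  rw [norm_smul, norm_add_sq_real, norm_smul, real_inner_smul_right,
    Real.norm_eq_abs, Real.norm_eq_abs, abs_of_nonneg (en_pos p).le,
    abs_of_nonneg (en_pos q).le] at h2
  have hp := en_sq p
  have hq := en_sq q
  nlinarith [h2, hp, hq]

theorem u_change_of_variables_bijective (p : R3) :
    Function.Bijective (fun q : R3 => en p • q - en q • p) ∧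
    ∀ q u : R3, u = en p • q - en q • p →
      q = (en q / en p) • p + (en p)⁻¹ • u := by
  have hne := en_ne p
  constructor
  · constructor
    · -- injectivity
      intro q1 q2 h
      simp only at h
      set u := en p • q1 - en q1 • p with hu
      have k1 := key p q1 u rfl
      have k2 := key p q2 u h
      set a := ⟪u, p⟫
      have h1 : en q1 - 2 * a > 0 := by
        nlinarith [k1, one_le_en q1, one_le_en p, sq_nonneg ‖u‖]
      have hfac : (en q1 - en q2) * (en q1 + en q2 - 2 * a) = 0 := by
        linear_combination k1 - k2
      have hx : en q1 = en q2 := by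
        have h2 : en q1 + en q2 - 2 * a > 0 := by
          have := one_le_en q2; linarith
        have := mul_eq_zero.mp hfac
        rcases this with h' | h'
        · linarith
        · linarith
      have hh : en p • q1 - en q1 • p = en p • q2 - en q2 • p := h
      rw [hx] at hh
      have h3 : en p • q1 = en p • q2 := sub_left_inj.mp hh
      exact smul_right_injective R3 hne h3
    · -- surjectivity
      intro u
      set a := ⟪u, p⟫ with ha
      set s := Real.sqrt (a ^ 2 + (en p ^ 2 + ‖u‖ ^ 2)) with hs
      have hs2 : s ^ 2 = a ^ 2 + (en p ^ 2 + ‖u‖ ^ 2) := by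
        rw [hs]; exact Real.sq_sqrt (by positivity)
      have hsnn : 0 ≤ s := Real.sqrt_nonneg _
      set c := a + s with hc
      have hb : (1:ℝ) ≤ en p ^ 2 + ‖u‖ ^ 2 := by
        nlinarith [one_le_en p, sq_nonneg ‖u‖]
      have hcpos : 0 < c := by
        rcases le_or_gt a 0 with h' | h'
        · have hlt : (-a) ^ 2 < s ^ 2 := by nlinarith
          have := lt_of_pow_lt_pow_left₀ 2 hsnn hlt
          rw [hc]; linarith
        · rw [hc]; linarith
      have hc2 : c ^ 2 = 2 * a * c + (en p ^ 2 + ‖u‖ ^ 2) := by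
        linear_combination hs2
      refine ⟨(en p)⁻¹ • (u + c • p), ?_⟩
      set q := (en p)⁻¹ • (u + c • p) with hq
      have hq1 : en p • q = u + c • p := by
        rw [hq, smul_inv_smul₀ hne]
      clear hq
      clear_value q
      have hexp : en p ^ 2 * ‖q‖ ^ 2 = ‖u‖ ^ 2 + 2 * (c * a) + c ^ 2 * ‖p‖ ^ 2 := by
        have h2 : ‖en p • q‖ ^ 2 = ‖u + c • p‖ ^ 2 := by rw [hq1]
        rw [norm_smul, norm_add_sq_real, norm_smul, real_inner_smul_right,
          Real.norm_eq_abs, Real.norm_eq_abs, abs_of_nonneg (en_pos p).le,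
          abs_of_nonneg hcpos.le] at h2
        nlinarith [h2]
      have h4 : en p ^ 2 * (1 + ‖q‖ ^ 2) = en p ^ 2 * c ^ 2 := by
        linear_combination hexp - c ^ 2 * (en_sq p) - hc2
      have h5 : 1 + ‖q‖ ^ 2 = c ^ 2 :=
        mul_left_cancel₀ (pow_ne_zero 2 hne) h4
      have henq : en q = c := by
        rw [en, h5]
        exact Real.sqrt_sq hcpos.le
      simp only
      rw [henq, hq1]
      abel
  · intro q u h
    rw [h]
    match_scalars <;> field_simp <;> ring
end
end

section
/- With the Glassey–Strauss post-collisional momenta p' = p + aω, q' = q − aω where a = a(p,q,ω) as above, energy is conserved: √(1+|p'|²) + √(1+|q'|²) = √(1+|p|²) + √(1+|q|²). -/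
open scoped RealInnerProductSpace

noncomputable section

/-- Glassey–Strauss collision coefficient -/
def aGS (p q ω : R3) : ℝ :=
  2 * (en p + en q) * en p * en q * ⟪ω, (en q)⁻¹ • q - (en p)⁻¹ • p⟫ /
    ((en p + en q) ^ 2 - ⟪ω, p + q⟫ ^ 2)

set_option maxHeartbeats 1000000 in
theorem GS_energy_conservation (p q ω : R3) (hω : ‖ω‖ = 1) :
    en (p + aGS p q ω • ω) + en (q - aGS p q ω • ω) = en p + en q := by
  have hE2 : en p ^ 2 = 1 + ‖p‖ ^ 2 := Real.sq_sqrt (by positivity)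
  have hF2 : en q ^ 2 = 1 + ‖q‖ ^ 2 := Real.sq_sqrt (by positivity)
  have hE1 : 1 ≤ en p := by
    have h0 : 0 ≤ en p := Real.sqrt_nonneg _
    nlinarith [sq_nonneg ‖p‖]
  have hF1 : 1 ≤ en q := by
    have h0 : 0 ≤ en q := Real.sqrt_nonneg _
    nlinarith [sq_nonneg ‖q‖]
  have hu2 : ⟪ω, p⟫ ^ 2 ≤ en p ^ 2 - 1 := by
    have h := abs_real_inner_le_norm ω p
    rw [hω, one_mul] at h
    have := abs_nonneg ⟪ω, p⟫
    nlinarith [sq_abs ⟪ω, p⟫]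
  have hv2 : ⟪ω, q⟫ ^ 2 ≤ en q ^ 2 - 1 := by
    have h := abs_real_inner_le_norm ω q
    rw [hω, one_mul] at h
    have := abs_nonneg ⟪ω, q⟫
    nlinarith [sq_abs ⟪ω, q⟫]
  set E := en p with hE
  set F := en q with hF
  set u := ⟪ω, p⟫ with hu
  set v := ⟪ω, q⟫ with hv
  have hE0 : (0:ℝ) < E := by linarith
  have hF0 : (0:ℝ) < F := by linarith
  have hs0 : (0:ℝ) < E + F := by linarith
  have huE : |u| < E := by
    nlinarith [sq_abs u, abs_nonneg u]
  have hvF : |v| < F := by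
    nlinarith [sq_abs v, abs_nonneg v]
  have hd : 0 < (E + F) ^ 2 - (u + v) ^ 2 := by
    have h1 : |u + v| < E + F := by
      have := abs_add_le u v
      linarith
    nlinarith [sq_abs (u + v), abs_nonneg (u + v)]
  set A := aGS p q ω with hA
  have ha : A * ((E + F) ^ 2 - (u + v) ^ 2) = 2 * (E + F) * (E * v - F * u) := by
    rw [hA]
    unfold aGS
    rw [inner_sub_right, real_inner_smul_right, real_inner_smul_right, inner_add_right,
      ← hE, ← hF, ← hu, ← hv]
    rw [div_mul_cancel₀ _ hd.ne']
    field_simp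
  have hpE : ‖p‖ ^ 2 = E ^ 2 - 1 := by rw [hE]; linarith
  have hqF : ‖q‖ ^ 2 = F ^ 2 - 1 := by rw [hF]; linarith
  have hnp : en (p + A • ω) = Real.sqrt ((E + A * (u + v) / (E + F)) ^ 2) := by
    unfold en
    congr 1
    have hnorm : ‖p + A • ω‖ ^ 2 = ‖p‖ ^ 2 + 2 * (A * u) + A ^ 2 := by
      rw [norm_add_sq_real, real_inner_smul_right, norm_smul, hω, real_inner_comm, ← hu]
      rw [mul_one, Real.norm_eq_abs, sq_abs]
    rw [hnorm, hpE]
    field_simp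
    linear_combination A * ha
  have hnq : en (q - A • ω) = Real.sqrt ((F - A * (u + v) / (E + F)) ^ 2) := by
    unfold en
    congr 1
    have hnorm : ‖q - A • ω‖ ^ 2 = ‖q‖ ^ 2 - 2 * (A * v) + A ^ 2 := by
      rw [norm_sub_sq_real, real_inner_smul_right, norm_smul, hω, real_inner_comm, ← hv]
      rw [mul_one, Real.norm_eq_abs, sq_abs]
    rw [hnorm, hqF]
    field_simp
    linear_combination A * ha
  have hsq : (4:ℝ) ≤ (E + F) ^ 2 := by nlinarith
  have hXE : 0 < E * ((E + F) ^ 2 - (u + v) ^ 2) + 2 * (u + v) * (E * v - F * u) := by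
    have h1 : (1:ℝ) ≤ E ^ 2 - u ^ 2 := by linarith
    have h3 := mul_le_mul hsq h1 (by norm_num) (by positivity)
    nlinarith [sq_nonneg (F * u - E * v), hE0]
  have hXF : 0 < F * ((E + F) ^ 2 - (u + v) ^ 2) - 2 * (u + v) * (E * v - F * u) := by
    have h1 : (1:ℝ) ≤ F ^ 2 - v ^ 2 := by linarith
    have h3 := mul_le_mul hsq h1 (by norm_num) (by positivity)
    nlinarith [sq_nonneg (F * u - E * v), hF0]
  have hposE : 0 ≤ E + A * (u + v) / (E + F) := by
    have heq : (E * (E + F) + A * (u + v)) * ((E + F) ^ 2 - (u + v) ^ 2) =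
        (E + F) * (E * ((E + F) ^ 2 - (u + v) ^ 2) + 2 * (u + v) * (E * v - F * u)) := by
      linear_combination (u + v) * ha
    have h5 : 0 < E * (E + F) + A * (u + v) := by nlinarith [mul_pos hs0 hXE]
    have : E + A * (u + v) / (E + F) = (E * (E + F) + A * (u + v)) / (E + F) := by
      field_simp
    rw [this]
    positivity
  have hposF : 0 ≤ F - A * (u + v) / (E + F) := by
    have heq : (F * (E + F) - A * (u + v)) * ((E + F) ^ 2 - (u + v) ^ 2) =
        (E + F) * (F * ((E + F) ^ 2 - (u + v) ^ 2) - 2 * (u + v) * (E * v - F * u)) := by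
      linear_combination (-(u + v)) * ha
    have h5 : 0 < F * (E + F) - A * (u + v) := by nlinarith [mul_pos hs0 hXF]
    have : F - A * (u + v) / (E + F) = (F * (E + F) - A * (u + v)) / (E + F) := by
      field_simp
    rw [this]
    positivity
  rw [hnp, hnq, Real.sqrt_sq hposE, Real.sqrt_sq hposF]
  ring
end
end

section
/- With p'', q'' the center-of-momentum post-collisional momenta, energy is conserved: √(1+|p''|²) + √(1+|q''|²) = √(1+|p|²) + √(1+|q|²). -/
open scoped RealInnerProductSpace

noncomputable section

/-- center-of-momentum post-collisional momentum direction term -/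
def cmDir (p q ω : R3) : R3 :=
  ω + (((en p + en q) / Real.sqrt ((rg p q) ^ 2 + 4) - 1) *
      (⟪p + q, ω⟫ / ‖p + q‖ ^ 2)) • (p + q)

/-- key scalar identity -/
lemma key_id (c g E r n w : ℝ) (hc : c * (n * r) = (E - r) * w)
    (hE2 : E ^ 2 = r ^ 2 + n) (hr2 : r ^ 2 = g ^ 2 + 4) :
    (1 + (((2:ℝ)⁻¹ + g / 2 * c) ^ 2 * n + 2 * (((2:ℝ)⁻¹ + g / 2 * c) * (g / 2)) * w
        + (g / 2) ^ 2)) * (4 * n * r ^ 2)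
      = (E * r + g * w) ^ 2 * n := by
  linear_combination (2*g*n*r + 2*g^2*w*r + g^2*(c*n*r + (E-r)*w)) * hc
    + (g^2*w^2 - n*r^2) * hE2 - (n*r^2) * hr2

set_option maxHeartbeats 2000000 in
theorem CM_energy_conservation (p q ω : R3) (hpq : p + q ≠ 0) (hω : ‖ω‖ = 1) :
    en ((2:ℝ)⁻¹ • (p + q) + (rg p q / 2) • cmDir p q ω)
      + en ((2:ℝ)⁻¹ • (p + q) - (rg p q / 2) • cmDir p q ω) = en p + en q := by
  have hep2 : en p ^ 2 = 1 + ‖p‖ ^ 2 := Real.sq_sqrt (by positivity)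
  have heq2 : en q ^ 2 = 1 + ‖q‖ ^ 2 := Real.sq_sqrt (by positivity)
  have hep : 0 < en p := Real.sqrt_pos.2 (by positivity)
  have heq : 0 < en q := Real.sqrt_pos.2 (by positivity)
  have hip : ⟪p, q⟫ ≤ ‖p‖ * ‖q‖ := real_inner_le_norm p q
  have hpe : 1 + ⟪p, q⟫ ≤ en p * en q := by
    nlinarith [sq_nonneg (‖p‖ - ‖q‖), mul_pos hep heq, norm_nonneg p, norm_nonneg q,
      mul_nonneg (norm_nonneg p) (norm_nonneg q)]
  have hg2 : rg p q ^ 2 = 2 * (en p * en q - ⟪p, q⟫ - 1) := Real.sq_sqrt (by linarith)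
  have hg0 : 0 ≤ rg p q := Real.sqrt_nonneg _
  set g := rg p q with hgdef
  set E := en p + en q with hEdef
  set r := Real.sqrt (g ^ 2 + 4) with hrdef
  have hr2 : r ^ 2 = g ^ 2 + 4 := Real.sq_sqrt (by positivity)
  have hr0 : 0 < r := Real.sqrt_pos.2 (by positivity)
  set n := ‖p + q‖ ^ 2 with hndef
  have hn0 : 0 < n := by
    have h := norm_pos_iff.mpr hpq
    rw [hndef]; positivity
  set w := ⟪p + q, ω⟫ with hwdef
  have hnn : n = ‖p‖ ^ 2 + 2 * ⟪p, q⟫ + ‖q‖ ^ 2 := norm_add_sq_real p q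
  have hE2 : E ^ 2 = r ^ 2 + n := by
    rw [hEdef]; linear_combination hep2 + heq2 - hg2 - hr2 - hnn
  have hE0 : 0 < E := by rw [hEdef]; positivity
  set c := (E / r - 1) * (w / n) with hcdef
  have hc : c * (n * r) = (E - r) * w := by
    have h1 : w / n * n = w := div_mul_cancel₀ w hn0.ne'
    have h2 : (E / r - 1) * r = E - r := by
      rw [sub_mul, div_mul_cancel₀ _ hr0.ne', one_mul]
    calc c * (n * r) = ((E / r - 1) * r) * (w / n * n) := by rw [hcdef]; ring
      _ = (E - r) * w := by rw [h1, h2]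
  have hcm : cmDir p q ω = ω + c • (p + q) := by
    rw [cmDir, ← hgdef, ← hEdef, ← hrdef, ← hwdef, ← hndef, ← hcdef]
  have habs : |w| ≤ ‖p + q‖ := by
    have h := abs_real_inner_le_norm (p + q) ω
    rwa [hω, mul_one, ← hwdef] at h
  have hP2 : ‖p + q‖ ^ 2 = n := hndef.symm
  clear_value g E r n w c
  -- norm formula
  have hsq : ∀ a b : ℝ, ‖a • (p + q) + b • ω‖ ^ 2 = a ^ 2 * n + 2 * (a * b) * w + b ^ 2 := by
    intro a b
    rw [norm_add_sq_real, real_inner_smul_left, real_inner_smul_right, norm_smul, norm_smul, hω]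
    simp only [mul_pow, sq_abs, mul_one, Real.norm_eq_abs]
    rw [← hP2, ← hwdef]
    ring
  -- decompositions
  have hp'' : (2:ℝ)⁻¹ • (p + q) + (g / 2) • cmDir p q ω
      = ((2:ℝ)⁻¹ + g / 2 * c) • (p + q) + (g / 2) • ω := by
    rw [hcm]; module
  have hq'' : (2:ℝ)⁻¹ • (p + q) - (g / 2) • cmDir p q ω
      = ((2:ℝ)⁻¹ + g / 2 * (-c)) • (p + q) + (-(g / 2)) • ω := by
    rw [hcm]; module
  -- nonnegativity bounds
  have hPn : ‖p + q‖ ≤ E := by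
    nlinarith [norm_nonneg (p + q), sq_nonneg g, hP2, hE2, hr2, hE0]
  have hwb : g * |w| ≤ E * r := by
    have hgr : g ≤ r := by nlinarith [hr2, hg0, hr0]
    calc g * |w| ≤ r * ‖p + q‖ := mul_le_mul hgr habs (abs_nonneg w) (le_of_lt hr0)
      _ ≤ r * E := by nlinarith [hr0, hPn]
      _ = E * r := by ring
  have hpos1 : 0 ≤ E * r + g * w := by
    nlinarith [neg_abs_le w, abs_nonneg w, hg0, hwb]
  have hpos2 : 0 ≤ E * r - g * w := by
    nlinarith [le_abs_self w, abs_nonneg w, hg0, hwb]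
  have h2r : (0:ℝ) ≤ 2 * r := by linarith
  have h4nr : (4 * n * r ^ 2 : ℝ) ≠ 0 := by nlinarith [hn0, hr0, sq_nonneg r]
  -- first energy
  have hen1 : en ((2:ℝ)⁻¹ • (p + q) + (g / 2) • cmDir p q ω) = (E * r + g * w) / (2 * r) := by
    simp only [en]
    rw [hp'', hsq]
    have h1 : (1:ℝ) + (((2:ℝ)⁻¹ + g / 2 * c) ^ 2 * n
        + 2 * (((2:ℝ)⁻¹ + g / 2 * c) * (g / 2)) * w + (g / 2) ^ 2)
        = ((E * r + g * w) / (2 * r)) ^ 2 := by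
      have hkey := key_id c g E r n w hc hE2 hr2
      rw [show ((E * r + g * w) / (2 * r)) ^ 2 = (E * r + g * w) ^ 2 * n / (4 * n * r ^ 2) by
        field_simp [hn0.ne', hr0.ne']; ring]
      rw [eq_div_iff h4nr]
      linear_combination hkey
    rw [h1, Real.sqrt_sq (div_nonneg hpos1 h2r)]
  -- second energy
  have hen2 : en ((2:ℝ)⁻¹ • (p + q) - (g / 2) • cmDir p q ω) = (E * r - g * w) / (2 * r) := by
    simp only [en]
    rw [hq'', hsq]
    have hc' : (-c) * (n * r) = (E - r) * (-w) := by linear_combination -hc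
    have h2 : (1:ℝ) + (((2:ℝ)⁻¹ + g / 2 * (-c)) ^ 2 * n
        + 2 * (((2:ℝ)⁻¹ + g / 2 * (-c)) * (-(g / 2))) * w + (-(g / 2)) ^ 2)
        = ((E * r - g * w) / (2 * r)) ^ 2 := by
      have hkey := key_id (-c) g E r n (-w) hc' hE2 hr2
      rw [show ((E * r - g * w) / (2 * r)) ^ 2 = (E * r + g * (-w)) ^ 2 * n / (4 * n * r ^ 2) by
        field_simp [hn0.ne', hr0.ne']; ring]
      rw [eq_div_iff h4nr]
      linear_combination hkey
    rw [h2, Real.sqrt_sq (div_nonneg hpos2 h2r)]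
  rw [hen1, hen2]
  field_simp
  ring
end
end
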